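/- If α > β are ordinals, ℵ_α is regular (or more generally cf(ℵ_α) > ℵ_β), and ℵ_γ ^ ℵ_β < ℵ_α for all γ < α, then ℵ_α ^ ℵ_β = ℵ_α. -/

import Mathlib

/-! Since ℵ_β < cf ℵ_α, every map ℵ_β → ℵ_α is bounded by some ξ < ℵ_α, so
ℵ_α ^ ℵ_β ≤ ∑_{ξ < ℵ_α} |ξ| ^ ℵ_β ≤ ℵ_α · ℵ_α = ℵ_α. -/

open Cardinal Set

universe u

theorem exists_forall_lt_of_mk_lt_cof {A B : Type u} [LinearOrder A] (hB : #B < Order.cof A)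
    (f : B → A) : ∃ x, ∀ i, f i < x := by
  have hf : ¬IsCofinal (range f) := fun hf =>
    ((Order.cof_le hf).trans mk_range_le).not_gt hB
  obtain ⟨x, hx⟩ := not_isCofinal_iff.mp hf
  exact ⟨x, fun i => hx _ (mem_range_self i)⟩

theorem mk_arrow_le_sum_of_mk_lt_cof {A B : Type u} [LinearOrder A] (hB : #B < Order.cof A) :
    #(B → A) ≤ sum fun x : A => #(Iio x) ^ #B := by
  choose bound hbound using exists_forall_lt_of_mk_lt_cof hB
  simp only [power_def, ← mk_sigma]
  refine mk_le_of_injective (f := fun f => ⟨bound f, fun i => ⟨f i, hbound f i⟩⟩) ?_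
  intro f g hfg
  funext i
  exact congrArg (fun p : Σ x : A, B → Iio x => (p.2 i : A)) hfg

theorem power_le_self_of_lt_cof {κ μ : Cardinal.{u}} (hκ : ℵ₀ ≤ κ) (hμ : μ < κ.ord.cof)
    (h : ∀ c < κ, c ^ μ ≤ κ) : κ ^ μ ≤ κ := by
  have hB : #μ.out < Order.cof κ.ord.ToType := by rwa [mk_out, Ordinal.cof_toType]
  calc κ ^ μ = #(μ.out → κ.ord.ToType) := by rw [← power_def, mk_out, mk_ord_toType]
    _ ≤ sum fun x : κ.ord.ToType => #(Iio x) ^ #μ.out := mk_arrow_le_sum_of_mk_lt_cof hB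
    _ ≤ sum fun _ : κ.ord.ToType => κ := sum_le_sum _ _ fun x => by
          rw [mk_out]; exact h _ ((mk_Iio_lt x (by simp)).trans_eq (mk_ord_toType κ))
    _ = κ := by rw [sum_const', mk_ord_toType, mul_eq_self hκ]

theorem power_lt_aleph_of_lt {α : Ordinal} (hα : 0 < α) {μ : Cardinal}
    (h : ∀ γ < α, ℵ_ γ ^ μ < ℵ_ α) {c : Cardinal} (hc : c < ℵ_ α) : c ^ μ < ℵ_ α := by
  rcases lt_or_ge c ℵ₀ with hfin | hinf
  · calc c ^ μ ≤ ℵ_ 0 ^ μ := by rw [aleph_zero]; exact power_le_power_right hfin.le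
      _ < ℵ_ α := h 0 hα
  · obtain ⟨γ, rfl⟩ := mem_range_aleph_iff.mpr hinf
    exact h γ (aleph_lt_aleph.mp hc)

theorem aleph_power_eq_self_general (α β : Ordinal)
    (hcof : Cardinal.aleph β < (Cardinal.aleph α).ord.cof)
    (hlt : ∀ γ < α, Cardinal.aleph γ ^ Cardinal.aleph β < Cardinal.aleph α) :
    Cardinal.aleph α ^ Cardinal.aleph β = Cardinal.aleph α := by
  have hβα : β < α := aleph_lt_aleph.mp (hcof.trans_le (Ordinal.cof_ord_le _))
  refine le_antisymm (power_le_self_of_lt_cof (aleph0_le_aleph α) hcof fun c hc => ?_) ?_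
  · exact (power_lt_aleph_of_lt (pos_of_gt hβα) hlt hc).le
  · exact self_le_power _ (one_le_aleph0.trans (aleph0_le_aleph β))

theorem aleph_power_eq_self (α β : Ordinal) (hβα : β < α)
    (hcof : Cardinal.aleph β < (Cardinal.aleph α).ord.cof)
    (hlt : ∀ γ < α, Cardinal.aleph γ ^ Cardinal.aleph β < Cardinal.aleph α) :
    Cardinal.aleph α ^ Cardinal.aleph β = Cardinal.aleph α :=
  aleph_power_eq_self_general α β hcof hlt
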